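/- Every am-monoid is either of type 1 or of type 3; in particular, in every am-monoid 1[k] = 1 for every k ∈ ω. -/

import Mathlib

universe u

open scoped Classical

/-- A finite permutation of ω: an element of S_ω, i.e. a permutation moving
only finitely many points. -/
def FinPerm (σ : Equiv.Perm ℕ) : Prop := {n : ℕ | σ n ≠ n}.Finite

/-- The raw operations of a merge algebra: the binary merges `⋆_n` and the
actions `σ̄` of (finite) permutations. -/
structure MergeOps (A : Type u) where
  star : ℕ → A → A → A
  bar : Equiv.Perm ℕ → A → A

namespace MergeOps

variable {A : Type u}

/-- `chain g k = ((g 0 ⋆_1 g 1) ⋆_2 g 2) … ⋆_k (g k)`. -/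
def chain (M : MergeOps A) (g : ℕ → A) : ℕ → A
  | 0 => g 0
  | i + 1 => M.star (i + 1) (M.chain g i) (g (i + 1))

/-- `chainStar g k y = ((…(g 0 ⋆_1 g 1) ⋆_2 …) ⋆_{k-1} g (k-1)) ⋆_k y`. -/
def chainStar (M : MergeOps A) (g : ℕ → A) (k : ℕ) (y : A) : A :=
  match k with
  | 0 => y
  | k + 1 => M.star (k + 1) (M.chain g k) y

/-- The `n`-coordinate of `x` relative to the coordinator `pt`:
`x[n] = τ̄^n_0(x) ⋆_1 pt`. -/
def coord (M : MergeOps A) (pt x : A) (n : ℕ) : A :=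
  M.star 1 (M.bar (Equiv.swap 0 n) x) pt

end MergeOps

/-- A merge algebra: operations `⋆_n` and `σ̄` satisfying axioms (B1)–(B7). -/
structure MergeAlgebra (A : Type u) extends MergeOps A where
  /-- (B1) each `⋆_n` is associative -/
  star_assoc : ∀ (n : ℕ) (x y z : A), star n (star n x y) z = star n x (star n y z)
  /-- (B1) each `⋆_n` is idempotent -/
  star_idem : ∀ (n : ℕ) (x : A), star n x x = x
  /-- (B2) -/
  star_zero : ∀ x y : A, star 0 x y = y
  /-- (B3), first part (k ≥ n) -/
  B3a : ∀ {n k : ℕ}, n ≤ k → ∀ x y z : A, star n (star k x y) z = star n x z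
  /-- (B3), second part (k ≥ n) -/
  B3b : ∀ {n k : ℕ}, n ≤ k → ∀ x y z : A, star k x (star n y z) = star k x z
  /-- (B4) (k < n) -/
  B4 : ∀ {n k : ℕ}, k < n → ∀ x y z : A, star n (star k x y) z = star k x (star n y z)
  /-- (B5) `σ̄(τ̄(x)) = (τ∘σ)‾(x)` -/
  B5 : ∀ σ τ : Equiv.Perm ℕ, FinPerm σ → FinPerm τ → ∀ x : A,
      bar σ (bar τ x) = bar (τ * σ) x
  /-- (B5) `ῑ(x) = x` -/
  bar_id : ∀ x : A, bar 1 x = x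
  /-- (B6): for `n ≤ k` and `σ` a permutation of `k`, with `f i = x` iff `σ i < n`:
  `σ̄(x ⋆_n y) = ((…(σ̄(f 0) ⋆_1 σ̄(f 1)) ⋆_2 …) ⋆_{k-1} σ̄(f (k-1))) ⋆_k y`. -/
  B6 : ∀ {n k : ℕ}, n ≤ k → ∀ σ : Equiv.Perm ℕ, (∀ i, k ≤ i → σ i = i) →
      ∀ x y : A, bar σ (star n x y) =
        toMergeOps.chainStar (fun i => bar σ (if σ i < n then x else y)) k y
  /-- (B7) -/
  B7 : ∀ {m n : ℕ} (σ τ : Equiv.Perm ℕ), FinPerm σ → FinPerm τ →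
      (∀ i, m ≤ i → i < n → σ i = τ i) →
      ∀ x y z : A, star n (star m z (bar σ x)) y = star n (star m z (bar τ x)) y

/-- An m-monoid: a monoid structure together with a merge algebra structure on
the same carrier, satisfying right distributivity (L1). -/
structure MMonoid (A : Type u) extends MergeAlgebra A where
  mul : A → A → A
  one : A
  mul_assoc : ∀ x y z : A, mul (mul x y) z = mul x (mul y z)
  one_mul : ∀ x : A, mul one x = x
  mul_one : ∀ x : A, mul x one = x
  /-- (L1) right distributivity -/
  L1 : ∀ (n : ℕ) (x y z : A), mul (star n x y) z = star n (mul x z) (mul y z)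

namespace MMonoid

variable {A : Type u} (M : MMonoid A)

/-- A cm-monoid is an m-monoid satisfying (L2): `σ̄(x)·y = σ̄(x·y)`. -/
def IsCM : Prop :=
  ∀ σ : Equiv.Perm ℕ, FinPerm σ → ∀ x y : A, M.mul (M.bar σ x) y = M.bar σ (M.mul x y)

/-- An am-monoid is an m-monoid satisfying (L3): `σ̄(x·y) = σ̄(x)·σ̄(y)`. -/
def IsAM : Prop :=
  ∀ σ : Equiv.Perm ℕ, FinPerm σ → ∀ x y : A, M.bar σ (M.mul x y) = M.mul (M.bar σ x) (M.bar σ y)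

/-- The `n`-coordinate `x[n] = τ̄^n_0(x) ⋆_1 1` (the coordinator is the unit). -/
def coord (x : A) (n : ℕ) : A := M.toMergeOps.coord M.one x n

/-- Extensionality: elements with the same coordinates are equal. -/
def Extensional : Prop := ∀ x y : A, (∀ n : ℕ, M.coord x n = M.coord y n) → x = y

/-- An element has rank ≤ n iff `x ⋆_n 1 = x`; the m-monoid is finitely ranked
if every element has finite rank. -/
def FinitelyRanked : Prop := ∀ x : A, ∃ n : ℕ, M.star n x M.one = x

/-- A degenerate m-monoid. -/
def Degenerate : Prop :=
  (∀ σ : Equiv.Perm ℕ, FinPerm σ → ∀ x : A, M.bar σ x = x) ∧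
    (∀ (n : ℕ) (x y : A), M.star n x y = y)

/-- `a` is finite dimensional: for every `n` there is `m` with
`(a·(1 ⋆_m b ⋆_{m+k} 1)) ⋆_n a = a` for all `b` and `k`. -/
def FinDimEl (a : A) : Prop :=
  ∀ n : ℕ, ∃ m : ℕ, ∀ (b : A) (k : ℕ),
    M.star n (M.mul a (M.star (m + k) (M.star m M.one b) M.one)) a = a

/-- `a` is ω-finite dimensional: for every `n` there is `m` with
`(a·(1 ⋆_m b)) ⋆_n a = a` for all `b`. -/
def OmegaFinDimEl (a : A) : Prop :=
  ∀ n : ℕ, ∃ m : ℕ, ∀ b : A,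
    M.star n (M.mul a (M.star m M.one b)) a = a

/-- An m-monoid is finite dimensional if every element is. -/
def FinDim : Prop := ∀ a : A, M.FinDimEl a

/-- An m-monoid is ω-finite dimensional if every element is. -/
def OmegaFinDim : Prop := ∀ a : A, M.OmegaFinDimEl a

end MMonoid

/-! In an am-monoid each `σ̄` is a monoid endomorphism with inverse `(σ⁻¹)‾`, so it fixes
the unit; hence `1[k] = 1 ⋆_1 1 = 1`. The dichotomy between types 1 and 3 is then
excluded middle on whether every coordinate of every element is `1`. -/

theorem FinPerm.inv {σ : Equiv.Perm ℕ} (hσ : FinPerm σ) : FinPerm σ⁻¹ := by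
  have hsupp : {n | σ⁻¹ n ≠ n} = {n | σ n ≠ n} :=
    Set.ext fun _ => (Equiv.Perm.inv_eq_iff_eq.trans eq_comm).not
  unfold FinPerm
  rwa [hsupp]

theorem FinPerm.swap (a b : ℕ) : FinPerm (Equiv.swap a b) :=
  (Set.toFinite ({a, b} : Set ℕ)).subset fun n hn => by
    by_contra hab
    simp only [Set.mem_insert_iff, Set.mem_singleton_iff, not_or] at hab
    exact hn (Equiv.swap_apply_of_ne_of_ne hab.1 hab.2)

namespace MMonoid

variable {A : Type u} {M : MMonoid A}

theorem bar_one_of_isAM (ham : M.IsAM) {σ : Equiv.Perm ℕ} (hσ : FinPerm σ) :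
    M.bar σ M.one = M.one := by
  have hcancel : M.bar σ (M.bar σ⁻¹ M.one) = M.one := by
    rw [M.B5 σ σ⁻¹ hσ hσ.inv, inv_mul_cancel, M.bar_id]
  calc M.bar σ M.one = M.mul (M.bar σ (M.bar σ⁻¹ M.one)) (M.bar σ M.one) := by
        rw [hcancel, M.one_mul]
    _ = M.bar σ (M.bar σ⁻¹ M.one) := by rw [← ham σ hσ, M.mul_one]
    _ = M.one := hcancel

theorem coord_one_of_isAM (ham : M.IsAM) (k : ℕ) : M.coord M.one k = M.one := by
  change M.star 1 (M.bar (Equiv.swap 0 k) M.one) M.one = M.one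
  rw [bar_one_of_isAM ham (FinPerm.swap 0 k), M.star_idem]

end MMonoid

/-- STATEMENT 11: every am-monoid is either of type 1 or of type 3; in
particular `1[k] = 1` for every `k`. -/
theorem am_type1_or_type3 {A : Type u} (M : MMonoid A) (ham : M.IsAM) :
    (∀ k : ℕ, M.coord M.one k = M.one) ∧
      ((∀ (a : A) (k : ℕ), M.coord a k = M.one) ∨
        ((∀ k : ℕ, M.coord M.one k = M.one) ∧
          ∃ (a : A) (n : ℕ), M.coord a n ≠ M.one)) := by
  have hone := MMonoid.coord_one_of_isAM ham
  exact ⟨hone, (em _).imp id fun htype1 => ⟨hone, by simpa only [not_forall] using htype1⟩⟩
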